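/- (Inverse inequality for IFE functions, Lemma 5.7.) For every ϱ > 0 and β^+, β^- > 0 there exists a constant C, depending only on β^+, β^-, and ϱ, such that for every ϱ-shape-regular simplex T ⊂ ℝ^N (N ∈ {2,3}), every cutting hyperplane H for which T_h^+ and T_h^- have positive measure, and every φ ∈ S_h(T): ∫_T |∇_h φ|² dx ≤ C² h_T^{-2} ∫_T φ² dx, where ∇_h φ denotes the piecewise constant broken gradient equal to ∇φ^± on T_h^±. -/

import Mathlib

/-!
Continuity across the interface forces `∇φ⁺ - ∇φ⁻` to be normal to it, and the flux condition
then makes `|∇φ⁺|` and `|∇φ⁻|` comparable, with ratio at most `K = 2 + β⁺/β⁻ + β⁻/β⁺`.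
The inscribed ball `B(z, r)` of `T` contains a ball of radius `r/4` on one side of the
interface, where `φ` is a single affine function `q`, and inside it a ball of radius `r/16` on
which `|q| ≥ r |∇q| / 8`. So `∫_T φ² ≳ |∇q|² r^(N+2)`, while
`∫_T |∇_h φ|² ≤ K² |∇q|² vol T ≲ K² |∇q|² h^N`, and shape regularity `h ≤ ϱ r` closes the
estimate.
-/

open MeasureTheory Metric Set
open scoped RealInnerProductSpace

noncomputable section

/-- Euclidean space `ℝ^N`. -/
abbrev Euc (N : ℕ) := EuclideanSpace ℝ (Fin N)

/-- Evaluation of the affine function with gradient `p.1` and constant `p.2`. -/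
noncomputable def affEval {N : ℕ} (p : Euc N × ℝ) (x : Euc N) : ℝ := ⟪p.1, x⟫ + p.2

/-- The function equal to `fp` on the positive side of the hyperplane through `x₀`
with normal `nv`, and to `fm` elsewhere. -/
noncomputable def pwFun {N : ℕ} (x₀ nv : Euc N) (fp fm : Euc N → ℝ) (x : Euc N) : ℝ :=
  if 0 < ⟪x - x₀, nv⟫ then fp x else fm x

section InnerProductSpace

variable {E : Type*} [NormedAddCommGroup E] [InnerProductSpace ℝ E]

theorem sub_mem_span_singleton_of_eq_on_hyperplane {a b n x₀ : E} {c d : ℝ}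
    (h : ∀ x, ⟪x - x₀, n⟫ = 0 → ⟪a, x⟫ + c = ⟪b, x⟫ + d) : a - b ∈ ℝ ∙ n := by
  rw [← Submodule.orthogonal_orthogonal (ℝ ∙ n)]
  intro w hw
  have hx₀ := h x₀ (by simp)
  have hw' := h (x₀ + w) (by
    rw [add_sub_cancel_left, ← Submodule.mem_orthogonal_singleton_iff_inner_left]; exact hw)
  rw [inner_add_right, inner_add_right] at hw'
  rw [real_inner_comm, inner_sub_left]
  linarith

theorem norm_le_of_sub_mem_span_of_flux {a b n : E} {βa βb : ℝ} (hβa : 0 ≤ βa)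
    (hβb : 0 < βb) (hn : ‖n‖ = 1) (hab : a - b ∈ ℝ ∙ n) (hflux : βa * ⟪a, n⟫ = βb * ⟪b, n⟫) :
    ‖b‖ ≤ (2 + βa / βb) * ‖a‖ := by
  obtain ⟨t, ht⟩ := Submodule.mem_span_singleton.mp hab
  have hnn : ⟪n, n⟫ = 1 := by rw [real_inner_self_eq_norm_sq, hn, one_pow]
  have htn : t = ⟪a, n⟫ - ⟪b, n⟫ := by
    rw [← inner_sub_left, ← ht, real_inner_smul_left, hnn, mul_one]
  have hβt : βb * t = (βb - βa) * ⟪a, n⟫ := by rw [htn]; linarith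
  have habs : |t| ≤ (1 + βa / βb) * ‖a‖ := by
    rw [← mul_le_mul_iff_of_pos_left hβb, ← abs_of_pos hβb, ← abs_mul, hβt, abs_mul,
      abs_of_pos hβb]
    calc |βb - βa| * |⟪a, n⟫| ≤ (βb + βa) * ‖a‖ := by
          gcongr
          · exact (abs_sub _ _).trans (by rw [abs_of_pos hβb, abs_of_nonneg hβa])
          · simpa [hn] using abs_real_inner_le_norm a n
      _ = βb * ((1 + βa / βb) * ‖a‖) := by field_simp
  calc ‖b‖ = ‖a - t • n‖ := by rw [ht, sub_sub_cancel]
    _ ≤ ‖a‖ + |t| := by simpa [norm_smul, hn] using norm_sub_le a (t • n)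
    _ ≤ (2 + βa / βb) * ‖a‖ := by linarith

theorem norm_le_mul_norm_of_flux {a b n : E} {βa βb : ℝ} (hβa : 0 < βa) (hβb : 0 < βb)
    (hn : ‖n‖ = 1) (hab : a - b ∈ ℝ ∙ n) (hflux : βa * ⟪a, n⟫ = βb * ⟪b, n⟫) :
    ‖b‖ ≤ (2 + βa / βb + βb / βa) * ‖a‖ ∧ ‖a‖ ≤ (2 + βa / βb + βb / βa) * ‖b‖ := by
  have hba : b - a ∈ ℝ ∙ n := by rw [← neg_sub]; exact neg_mem hab
  constructor
  · refine (norm_le_of_sub_mem_span_of_flux hβa.le hβb hn hab hflux).trans ?_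
    gcongr ?_ * _; linarith [div_pos hβb hβa]
  · refine (norm_le_of_sub_mem_span_of_flux hβb.le hβa hn hba hflux.symm).trans ?_
    gcongr ?_ * _; linarith [div_pos hβa hβb]

theorem exists_closedBall_subset_forall_le_inner_add (c a : E) (b : ℝ) {s : ℝ} (hs : 0 ≤ s)
    (hc : 0 ≤ ⟪a, c⟫ + b) :
    ∃ c', closedBall c' (s / 4) ⊆ closedBall c s ∧
      ∀ x ∈ closedBall c' (s / 4), s / 2 * ‖a‖ ≤ ⟪a, x⟫ + b := by
  set u : E := ‖a‖⁻¹ • a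
  have hu : ‖u‖ ≤ 1 := by
    rw [norm_smul, norm_inv, norm_norm]; exact inv_mul_le_one
  have hau : ⟪a, u⟫ = ‖a‖ := by
    rcases eq_or_ne a 0 with rfl | ha
    · simp [u]
    · rw [real_inner_smul_right, real_inner_self_eq_norm_sq]
      field_simp
  -- Moving the centre by `3s/4` along `a` raises the function by `3s/4 ‖a‖`, while it varies
  -- by at most `s/4 ‖a‖` on the small ball.
  set c' := c + (3 * s / 4) • u
  refine ⟨c', closedBall_subset_closedBall' ?_, fun x hx => ?_⟩
  · rw [dist_self_add_left, norm_smul, Real.norm_of_nonneg (by positivity)]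
    nlinarith
  · have hx' : |⟪a, x - c'⟫| ≤ s / 4 * ‖a‖ := by
      refine (abs_real_inner_le_norm _ _).trans ?_
      rw [mul_comm, ← dist_eq_norm]
      exact mul_le_mul_of_nonneg_right (mem_closedBall.mp hx) (norm_nonneg a)
    have hsplit : ⟪a, x⟫ + b = ⟪a, x - c'⟫ + 3 * s / 4 * ‖a‖ + (⟪a, c⟫ + b) := by
      rw [inner_sub_right, inner_add_right, real_inner_smul_right, hau]; ring
    rw [hsplit]
    linarith [neg_abs_le ⟪a, x - c'⟫]

theorem exists_closedBall_subset_forall_le_inner_add_or_forall_le_neg (c a : E) (b : ℝ) {s : ℝ}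
    (hs : 0 ≤ s) :
    ∃ c', closedBall c' (s / 4) ⊆ closedBall c s ∧
      ((∀ x ∈ closedBall c' (s / 4), s / 2 * ‖a‖ ≤ ⟪a, x⟫ + b) ∨
        ∀ x ∈ closedBall c' (s / 4), ⟪a, x⟫ + b ≤ -(s / 2 * ‖a‖)) := by
  rcases le_or_gt 0 (⟪a, c⟫ + b) with hc | hc
  · obtain ⟨c', hsub, hle⟩ := exists_closedBall_subset_forall_le_inner_add c a b hs hc
    exact ⟨c', hsub, .inl hle⟩
  · obtain ⟨c', hsub, hle⟩ := exists_closedBall_subset_forall_le_inner_add c (-a) (-b) hs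
      (by rw [inner_neg_left]; linarith)
    refine ⟨c', hsub, .inr fun x hx => ?_⟩
    have := hle x hx
    rw [norm_neg, inner_neg_left] at this
    linarith

theorem exists_closedBall_subset_one_side_of_hyperplane (c x₀ n : E) {s : ℝ} (hs : 0 < s)
    (hn : n ≠ 0) :
    ∃ c', closedBall c' (s / 4) ⊆ closedBall c s ∧
      ((∀ x ∈ closedBall c' (s / 4), 0 < ⟪x - x₀, n⟫) ∨
        ∀ x ∈ closedBall c' (s / 4), ⟪x - x₀, n⟫ < 0) := by
  have hpos : 0 < s / 2 * ‖n‖ := by positivity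
  have hlin : ∀ x, ⟪n, x⟫ + -⟪n, x₀⟫ = ⟪x - x₀, n⟫ := fun x => by
    rw [inner_sub_left, real_inner_comm n x, real_inner_comm n x₀]; ring
  obtain ⟨c', hsub, hle | hle⟩ :=
    exists_closedBall_subset_forall_le_inner_add_or_forall_le_neg c n (-⟪n, x₀⟫) hs.le
  · exact ⟨c', hsub, .inl fun x hx => by linarith [hlin x, hle x hx]⟩
  · exact ⟨c', hsub, .inr fun x hx => by linarith [hlin x, hle x hx]⟩

end InnerProductSpace

theorem setIntegral_norm_sq_le_mul_measureReal {α G : Type*} [MeasurableSpace α]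
    [NormedAddCommGroup G] {μ : Measure α} {T : Set α} (hT : MeasurableSet T) (hμT : μ T ≠ ⊤)
    {V : α → G} {M : ℝ} (hV : ∀ x ∈ T, ‖V x‖ ≤ M) :
    ∫ x in T, ‖V x‖ ^ 2 ∂μ ≤ M ^ 2 * μ.real T := by
  rw [mul_comm, ← smul_eq_mul, ← setIntegral_const]
  refine integral_mono_of_nonneg (.of_forall fun x => by positivity) (integrableOn_const hμT) ?_
  refine (ae_restrict_iff' hT).mpr (.of_forall fun x hx => ?_)
  exact pow_le_pow_left₀ (norm_nonneg _) (hV x hx) 2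

section AddHaar

open Module

variable {E : Type*} [NormedAddCommGroup E] [InnerProductSpace ℝ E] [FiniteDimensional ℝ E]
  [MeasurableSpace E] [BorelSpace E] (μ : Measure E) [μ.IsAddHaarMeasure]

theorem measureReal_le_diam_pow {T : Set E} (hT : Bornology.IsBounded T) {x : E} (hx : x ∈ T) :
    μ.real T ≤ diam T ^ finrank ℝ E * μ.real (ball 0 1) := by
  rw [← μ.addHaar_real_closedBall x diam_nonneg]
  exact measureReal_mono (fun y hy => mem_closedBall.mpr (dist_le_diam_of_mem hT hy hx))
    measure_closedBall_lt_top.ne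

theorem le_setIntegral_sq_of_eq_inner_add_on_closedBall {T : Set E} {c : E} {s : ℝ}
    (hs : 0 ≤ s) (hcT : closedBall c s ⊆ T) {F : E → ℝ} (hF : IntegrableOn (fun x => F x ^ 2) T μ)
    {a : E} {b : ℝ} (hFc : ∀ x ∈ closedBall c s, F x = ⟪a, x⟫ + b) :
    (s / 2 * ‖a‖) ^ 2 * ((s / 4) ^ finrank ℝ E * μ.real (ball 0 1)) ≤ ∫ x in T, F x ^ 2 ∂μ := by
  obtain ⟨c', hc'c, hc'F⟩ := exists_closedBall_subset_forall_le_inner_add_or_forall_le_neg c a b hs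
  have hFbig : ∀ x ∈ closedBall c' (s / 4), (s / 2 * ‖a‖) ^ 2 ≤ F x ^ 2 := by
    intro x hx
    rw [hFc x (hc'c hx)]
    rcases hc'F with hle | hle
    · exact pow_le_pow_left₀ (by positivity) (hle x hx) 2
    · rw [← neg_sq (⟪a, x⟫ + b)]
      exact pow_le_pow_left₀ (by positivity) (le_neg_of_le_neg (hle x hx)) 2
  have hc'T : closedBall c' (s / 4) ⊆ T := hc'c.trans hcT
  rw [← μ.addHaar_real_closedBall c' (by positivity)]
  refine (setIntegral_ge_of_const_le_real measurableSet_closedBall measure_closedBall_lt_top.ne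
    hFbig (hF.mono_set hc'T)).trans ?_
  exact setIntegral_mono_set hF (.of_forall fun x => sq_nonneg _) (.of_forall hc'T)

theorem setIntegral_norm_sq_le_of_eq_inner_add_on_closedBall [Nontrivial E]
    {G : Type*} [NormedAddCommGroup G] {T : Set E} (hT : IsCompact T)
    {c : E} {s ϱ K : ℝ} (hs : 0 < s) (hcT : closedBall c s ⊆ T) (hreg : diam T ≤ ϱ * s)
    {F : E → ℝ} (hF : IntegrableOn (fun x => F x ^ 2) T μ) {a : E} {b : ℝ}
    (hFc : ∀ x ∈ closedBall c s, F x = ⟪a, x⟫ + b) {V : E → G} (hV : ∀ x ∈ T, ‖V x‖ ≤ K * ‖a‖) :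
    ∫ x in T, ‖V x‖ ^ 2 ∂μ ≤
      4 ^ (finrank ℝ E + 1) * K ^ 2 * ϱ ^ (finrank ℝ E + 2) / diam T ^ 2 *
        ∫ x in T, F x ^ 2 ∂μ := by
  set d := finrank ℝ E
  set ω := μ.real (ball (0 : E) 1)
  set h := diam T
  have hh : 0 < h := by
    have := diam_mono hcT hT.isBounded
    rw [diam_closedBall_eq c hs.le] at this
    linarith
  have hϱ : 0 < ϱ := pos_of_mul_pos_left (hh.trans_le hreg) hs.le
  have hupper :=
    setIntegral_norm_sq_le_mul_measureReal hT.measurableSet (hT.measure_lt_top (μ := μ)).ne hV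
  have hvol : μ.real T ≤ h ^ d * ω :=
    measureReal_le_diam_pow μ hT.isBounded (hcT (mem_closedBall_self hs.le))
  have hlower := le_setIntegral_sq_of_eq_inner_add_on_closedBall μ hs.le hcT hF hFc
  rw [div_mul_eq_mul_div, le_div_iff₀ (by positivity)]
  calc (∫ x in T, ‖V x‖ ^ 2 ∂μ) * h ^ 2 ≤ (K * ‖a‖) ^ 2 * (h ^ d * ω) * h ^ 2 := by
        grw [hupper, hvol]
    _ = (K * ‖a‖) ^ 2 * ω * h ^ (d + 2) := by ring
    _ ≤ (K * ‖a‖) ^ 2 * ω * (ϱ * s) ^ (d + 2) := by gcongr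
    _ = 4 ^ (d + 1) * K ^ 2 * ϱ ^ (d + 2) * ((s / 2 * ‖a‖) ^ 2 * ((s / 4) ^ d * ω)) := by
        rw [div_pow s 4 d]; field_simp; ring
    _ ≤ 4 ^ (d + 1) * K ^ 2 * ϱ ^ (d + 2) * ∫ x in T, F x ^ 2 ∂μ := by gcongr

end AddHaar

theorem continuous_affEval {N : ℕ} (p : Euc N × ℝ) : Continuous (affEval p) := by
  unfold affEval; fun_prop

theorem integrableOn_pwFun_sq {N : ℕ} {T : Set (Euc N)} (hT : IsCompact T) (x₀ nv : Euc N)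
    {fp fm : Euc N → ℝ} (hfp : Continuous fp) (hfm : Continuous fm) :
    IntegrableOn (fun x => pwFun x₀ nv fp fm x ^ 2) T := by
  have hmeas : Measurable (pwFun x₀ nv fp fm) :=
    Measurable.ite (measurableSet_lt measurable_const (by fun_prop)) hfp.measurable hfm.measurable
  refine Integrable.mono'
    ((by fun_prop : Continuous fun x => fp x ^ 2 + fm x ^ 2).continuousOn.integrableOn_compact hT)
    (hmeas.pow_const 2).aestronglyMeasurable (.of_forall fun x => ?_)
  rw [Real.norm_of_nonneg (sq_nonneg _), pwFun]
  split_ifs <;> nlinarith [sq_nonneg (fp x), sq_nonneg (fm x)]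

theorem four_pow_mul_le_sq {d : ℕ} (hd : d ≤ 3) (K : ℝ) {ϱ : ℝ} (hϱ : 0 ≤ ϱ) :
    4 ^ (d + 1) * K ^ 2 * (4 * ϱ) ^ (d + 2) ≤ (512 * K * (1 + ϱ) ^ 3) ^ 2 := by
  calc 4 ^ (d + 1) * K ^ 2 * (4 * ϱ) ^ (d + 2)
        = K ^ 2 * ((4 : ℝ) ^ (2 * d + 3) * ϱ ^ (d + 2)) := by ring
    _ ≤ K ^ 2 * ((4 : ℝ) ^ 9 * (1 + ϱ) ^ 6) := by
        gcongr K ^ 2 * (?_ * ?_)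
        · exact pow_le_pow_right₀ (by norm_num) (by omega)
        · exact (pow_le_pow_left₀ hϱ (by linarith) _).trans
            (pow_le_pow_right₀ (by linarith) (by omega))
    _ = (512 * K * (1 + ϱ) ^ 3) ^ 2 := by ring

/-- Lemma 5.7 (inverse inequality for IFE functions):
`‖∇_h φ‖_{L²(T)} ≤ C h_T^{-1} ‖φ‖_{L²(T)}` with `C = C(β⁺, β⁻, ϱ)`, stated in the
squared form `∫_T |∇_h φ|² dx ≤ C² h_T⁻² ∫_T φ² dx`. -/
theorem statement12
    (ϱ βp βm : ℝ) (hϱ : 0 < ϱ) (hβp : 0 < βp) (hβm : 0 < βm) :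
    ∃ C : ℝ, 0 < C ∧
      ∀ (N : ℕ), (N = 2 ∨ N = 3) →
      ∀ (v : Fin (N + 1) → Euc N), AffineIndependent ℝ v →
      ∀ (Tset : Set (Euc N)), Tset = convexHull ℝ (Set.range v) →
      -- shape regularity: h_T ≤ ϱ r_T
      (∃ z r, 0 < r ∧ closedBall z r ⊆ Tset ∧ Metric.diam Tset ≤ ϱ * r) →
      ∀ (nv x₀ : Euc N), ‖nv‖ = 1 →
      ∀ (Hpl : Set (Euc N)), Hpl = {x | ⟪x - x₀, nv⟫ = 0} →
      -- both pieces T_h^± of the cut simplex have positive measure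
      0 < volume {x ∈ Tset | 0 < ⟪x - x₀, nv⟫} →
      0 < volume {x ∈ Tset | ⟪x - x₀, nv⟫ < 0} →
      -- φ ∈ S_h(T), with affine pieces `affEval p` on T_h^+ and `affEval m` on T_h^-
      ∀ (p m : Euc N × ℝ),
        (∀ x ∈ Hpl, affEval p x = affEval m x) →
        βp * ⟪p.1, nv⟫ = βm * ⟪m.1, nv⟫ →
        (∫ x in Tset, ‖if 0 < ⟪x - x₀, nv⟫ then p.1 else m.1‖ ^ 2) ≤
          C ^ 2 / Metric.diam Tset ^ 2 *
            ∫ x in Tset, (pwFun x₀ nv (affEval p) (affEval m) x) ^ 2 := by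
  set K := 2 + βp / βm + βm / βp
  refine ⟨512 * K * (1 + ϱ) ^ 3, by positivity, ?_⟩
  rintro N hN v - T rfl ⟨z, r, hr, hzT, hreg⟩ nv x₀ hnv Hpl rfl - - p m hcont hflux
  have hnv0 : nv ≠ 0 := norm_ne_zero_iff.mp (by simp [hnv])
  have : Nontrivial (Euc N) := nontrivial_of_ne nv 0 hnv0
  obtain ⟨hm, hp⟩ := norm_le_mul_norm_of_flux hβp hβm hnv
    (sub_mem_span_singleton_of_eq_on_hyperplane hcont) hflux
  obtain ⟨c, hcz, hside⟩ := exists_closedBall_subset_one_side_of_hyperplane z x₀ nv hr hnv0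
  obtain ⟨q, hq, hVq⟩ : ∃ q : Euc N × ℝ,
      (∀ x ∈ closedBall c (r / 4), pwFun x₀ nv (affEval p) (affEval m) x = ⟪q.1, x⟫ + q.2) ∧
      ∀ x ∈ convexHull ℝ (range v), ‖if 0 < ⟪x - x₀, nv⟫ then p.1 else m.1‖ ≤ K * ‖q.1‖ := by
    have hK : 1 ≤ K := by linarith [div_pos hβm hβp, div_pos hβp hβm]
    rcases hside with hpos | hneg
    · refine ⟨p, fun x hx => if_pos (hpos x hx), fun x _ => ?_⟩
      split_ifs
      exacts [le_mul_of_one_le_left (norm_nonneg _) hK, hm]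
    · refine ⟨m, fun x hx => if_neg (hneg x hx).not_gt, fun x _ => ?_⟩
      split_ifs
      exacts [hp, le_mul_of_one_le_left (norm_nonneg _) hK]
  have hT : IsCompact (convexHull ℝ (range v)) := (finite_range v).isCompact_convexHull ℝ
  have hF := integrableOn_pwFun_sq hT x₀ nv (continuous_affEval p) (continuous_affEval m)
  have hreg' : diam (convexHull ℝ (range v)) ≤ 4 * ϱ * (r / 4) := by linarith
  have hmain := setIntegral_norm_sq_le_of_eq_inner_add_on_closedBall volume hT (by positivity)
    (hcz.trans hzT) hreg' hF hq hVq
  rw [finrank_euclideanSpace_fin] at hmain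
  refine hmain.trans ?_
  gcongr ?_ / _ * _
  exact four_pow_mul_le_sq (by omega) K hϱ.le
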